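/- arXiv:0712.2423 — 3 statements merged into one kernel-verified Lean document; each statement's English description precedes it below -/
import Mathlib

section
/- If ξ ∈ ℝ is δ-badly approximable (i.e. inf over positive integers p of p·‖pξ‖ ≥ δ, where ‖·‖ denotes distance to the nearest integer), δ ∈ (0, 1/2), β ∈ [0,1], α = 1 - β, and p is a positive integer, then the number of integers x with p < x ≤ 2p and ‖xξ‖ ≤ δ / (p · log(p+1))^β is at most (24δ + 2) · p^α / (log(p+1))^β. -/
open MeasureTheory Real

/-- Distance from a real number to the nearest integer. -/
noncomputable def nint (t : ℝ) : ℝ := |t - round t|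

/-! Write `η = δ / (p log (p+1))^β` and `r x = xξ - round (xξ)`, so that the set counts the
`x ∈ (p, 2p]` with `|r x| ≤ η`. Two such `x < y` satisfy `δ ≤ (y - x) |r y - r x| ≤ p |r y - r x|`,
so the values `r x` are `δ/p`-separated in `[-η, η]` and there are at most `2pη/δ + 1` of them;
this suffices when `4pη ≥ 1`. When `4pη < 1`, the integer `y · round (xξ) - x · round (yξ)` has
absolute value `< 1`, hence vanishes: all `round (xξ) / x` equal one fraction `A/Z` in lowest
terms, every `x` is a multiple `cZ`, and `cδ ≤ Z · c |Zξ - A| = Z |r x| ≤ 2pη` leaves at most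
`2pη/δ` possible multipliers. -/

lemma rpow_one_sub_div_rpow {x y : ℝ} (hx : 0 < x) (hy : 0 ≤ y) (β : ℝ) :
    x ^ (1 - β) / y ^ β = x / (x * y) ^ β := by
  rw [Real.mul_rpow hx.le hy, Real.rpow_sub hx, Real.rpow_one, div_div]

def BadlyApprox (δ ξ : ℝ) : Prop := ∀ p : ℕ, 0 < p → δ ≤ (p : ℝ) * nint ((p : ℝ) * ξ)

lemma nint_nonneg (t : ℝ) : 0 ≤ nint t := abs_nonneg _

lemma nint_le_abs_sub_intCast (t : ℝ) (n : ℤ) : nint t ≤ |t - n| := round_le t n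

lemma nint_sub_le (s t : ℝ) : nint (s - t) ≤ |(s - round s) - (t - round t)| := by
  have h := nint_le_abs_sub_intCast (s - t) (round s - round t)
  push_cast at h
  convert h using 2
  ring

lemma card_le_div_add_one_of_separated {ι : Type*} (S : Finset ι) (f : ι → ℝ) {a b s : ℝ}
    (hs : 0 < s) (hab : a ≤ b) (hf : ∀ i ∈ S, f i ∈ Set.Icc a b)
    (hsep : ∀ i ∈ S, ∀ j ∈ S, i ≠ j → s ≤ |f i - f j|) :
    (S.card : ℝ) ≤ (b - a) / s + 1 := by
  set bucket : ι → ℕ := fun i => ⌊(f i - a) / s⌋₊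
  have hnonneg : ∀ i ∈ S, 0 ≤ (f i - a) / s := fun i hi =>
    div_nonneg (sub_nonneg.mpr (hf i hi).1) hs.le
  have hinj : Set.InjOn bucket S := by
    intro i hi j hj hij
    by_contra hne
    have hclose : |(f i - a) / s - (f j - a) / s| < 1 := Int.abs_sub_lt_one_of_floor_eq_floor <| by
      rw [← Int.natCast_floor_eq_floor (hnonneg i hi), ← Int.natCast_floor_eq_floor (hnonneg j hj)]
      exact congrArg _ hij
    rw [← sub_div, sub_sub_sub_cancel_right, abs_div, abs_of_pos hs, div_lt_one hs] at hclose
    exact (hsep i hi j hj hne).not_gt hclose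
  have hmaps : S.image bucket ⊆ Finset.range (⌊(b - a) / s⌋₊ + 1) := by
    simp only [Finset.subset_iff, Finset.mem_image, Finset.mem_range, forall_exists_index, and_imp]
    rintro _ i hi rfl
    exact Nat.lt_succ_of_le <| Nat.floor_le_floor <|
      div_le_div_of_nonneg_right (by linarith [(hf i hi).2]) hs.le
  have hcard : S.card ≤ ⌊(b - a) / s⌋₊ + 1 := by
    simpa [Finset.card_image_of_injOn hinj] using Finset.card_le_card hmaps
  calc (S.card : ℝ) ≤ (⌊(b - a) / s⌋₊ : ℝ) + 1 := by exact_mod_cast hcard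
    _ ≤ (b - a) / s + 1 := by gcongr; exact Nat.floor_le (div_nonneg (by linarith) hs.le)

lemma exists_eq_den_mul_of_mul_eq_mul {x y : ℕ} {a b : ℤ} (hx : 0 < x) (hy : 0 < y)
    (h : (x : ℤ) * b = y * a) :
    ∃ c : ℕ, y = (Rat.divInt a x).den * c ∧ b = c * (Rat.divInt a x).num := by
  have hq : Rat.divInt a x = Rat.divInt b y := by
    rw [Rat.divInt_eq_div, Rat.divInt_eq_div, div_eq_div_iff (by positivity) (by positivity)]
    exact_mod_cast (by linarith : a * (y : ℤ) = b * x)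
  set q := Rat.divInt a x
  obtain ⟨c, hc⟩ : q.den ∣ y := Int.natCast_dvd_natCast.mp (hq ▸ Rat.den_dvd b y)
  refine ⟨c, hc, ?_⟩
  have hbq : (b : ℚ) = c * (q.den * q) := by
    have hby : (b : ℚ) = y * q := by
      rw [hq, Rat.divInt_eq_div, Int.cast_natCast]
      field_simp
    rw [hby, hc]; push_cast; ring
  rw [Rat.den_mul_eq_num] at hbq
  exact_mod_cast hbq

lemma mul_round_eq_of_nint_le {ξ η : ℝ} {N x y : ℕ} (hx : x ≤ N) (hy : y ≤ N)
    (hxη : nint (x * ξ) ≤ η) (hyη : nint (y * ξ) ≤ η) (hNη : 2 * N * η < 1) :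
    (x : ℤ) * round (y * ξ) = y * round (x * ξ) := by
  have hx' : (x : ℝ) ≤ N := by exact_mod_cast hx
  have hy' : (y : ℝ) ≤ N := by exact_mod_cast hy
  have hη : 0 ≤ η := (nint_nonneg _).trans hxη
  have hcast : (((y : ℤ) * round (x * ξ) - x * round (y * ξ) : ℤ) : ℝ)
      = x * (y * ξ - round (y * ξ)) - y * (x * ξ - round (x * ξ)) := by
    push_cast; ring
  have hlt : |(((y : ℤ) * round (x * ξ) - x * round (y * ξ) : ℤ) : ℝ)| < 1 := by
    rw [hcast]
    calc _ ≤ |(x : ℝ) * (y * ξ - round (y * ξ))| + |(y : ℝ) * (x * ξ - round (x * ξ))| :=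
          abs_sub _ _
      _ = x * nint (y * ξ) + y * nint (x * ξ) := by
          rw [abs_mul, abs_mul, Nat.abs_cast, Nat.abs_cast]; rfl
      _ ≤ N * η + N * η := by
          gcongr <;> nlinarith [nint_nonneg (x * ξ), nint_nonneg (y * ξ)]
      _ < 1 := by linarith
  rw [← Int.cast_abs, ← Int.cast_one, Int.cast_lt, Int.abs_lt_one_iff] at hlt
  linarith

namespace BadlyApprox

variable {δ ξ : ℝ}

lemma le_mul_abs_sub (h : BadlyApprox δ ξ) {x y : ℕ} (hxy : x < y) :
    δ ≤ ((y : ℝ) - x) * |(y * ξ - round (y * ξ)) - (x * ξ - round (x * ξ))| := by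
  have hd : (((y - x : ℕ) : ℝ)) = y - x := by push_cast [hxy.le]; ring
  calc δ ≤ ((y - x : ℕ) : ℝ) * nint (((y - x : ℕ) : ℝ) * ξ) := h (y - x) (by omega)
    _ ≤ ((y - x : ℕ) : ℝ) * |(y * ξ - round (y * ξ)) - (x * ξ - round (x * ξ))| :=
        mul_le_mul_of_nonneg_left (by rw [hd, sub_mul]; exact nint_sub_le _ _) (Nat.cast_nonneg _)
    _ = _ := by rw [hd]

lemma mul_le_mul_abs_sub (h : BadlyApprox δ ξ) {Z : ℕ} (hZ : 0 < Z) (c : ℕ) (A : ℤ) :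
    c * δ ≤ Z * |((Z * c : ℕ) : ℝ) * ξ - c * A| := by
  have hw : ((Z * c : ℕ) : ℝ) * ξ - c * A = c * (Z * ξ - A) := by push_cast; ring
  rw [hw, abs_mul, Nat.abs_cast, mul_left_comm]
  exact mul_le_mul_of_nonneg_left
    ((h Z hZ).trans (mul_le_mul_of_nonneg_left (nint_le_abs_sub_intCast _ _) (Nat.cast_nonneg _)))
    (Nat.cast_nonneg _)

lemma card_le_of_subset_Ioc (h : BadlyApprox δ ξ) (hδ : 0 < δ) {η : ℝ} (hη : 0 ≤ η)
    {m p : ℕ} (hp : 0 < p) {S : Finset ℕ}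
    (hS : ∀ x ∈ S, x ∈ Finset.Ioc m (m + p) ∧ nint (x * ξ) ≤ η) :
    (S.card : ℝ) ≤ 2 * p * η / δ + 1 := by
  have hpR : (0 : ℝ) < p := by exact_mod_cast hp
  have hsep : ∀ x ∈ S, ∀ y ∈ S, x < y →
      δ / p ≤ |(y * ξ - round (y * ξ)) - (x * ξ - round (x * ξ))| := by
    intro x hx y hy hxy
    have hyx : (y : ℝ) - x ≤ p := by
      have := (Finset.mem_Ioc.mp (hS x hx).1).1
      have := (Finset.mem_Ioc.mp (hS y hy).1).2
      rw [sub_le_iff_le_add]; exact_mod_cast (by omega : y ≤ p + x)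
    rw [div_le_iff₀' hpR]
    exact (h.le_mul_abs_sub hxy).trans (mul_le_mul_of_nonneg_right hyx (abs_nonneg _))
  have hcard := card_le_div_add_one_of_separated S (fun x : ℕ => (x : ℝ) * ξ - round ((x : ℝ) * ξ))
    (div_pos hδ hpR) (neg_le_self hη) (fun x hx => abs_le.mp (hS x hx).2) <| by
      intro x hx y hy hne
      rcases hne.lt_or_gt with hxy | hxy
      · rw [abs_sub_comm]; exact hsep x hx y hy hxy
      · exact hsep y hy x hx hxy
  calc (S.card : ℝ) ≤ (η - -η) / (δ / p) + 1 := hcard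
    _ = 2 * p * η / δ + 1 := by field_simp; ring

lemma card_le_floor_of_subset_Icc (h : BadlyApprox δ ξ) (hδ : 0 < δ) {η : ℝ} {N : ℕ}
    (hNη : 2 * N * η < 1) {S : Finset ℕ}
    (hS : ∀ x ∈ S, x ∈ Finset.Icc 1 N ∧ nint (x * ξ) ≤ η) :
    S.card ≤ ⌊N * η / δ⌋₊ := by
  rcases S.eq_empty_or_nonempty with rfl | ⟨x₀, hx₀⟩
  · simp
  obtain ⟨hx₀N, hx₀η⟩ := hS x₀ hx₀
  set q := Rat.divInt (round ((x₀ : ℝ) * ξ)) x₀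
  have hsub : S ⊆ (Finset.Icc 1 ⌊N * η / δ⌋₊).image (q.den * ·) := by
    intro y hy
    obtain ⟨hyN, hyη⟩ := hS y hy
    rw [Finset.mem_Icc] at hx₀N hyN
    obtain ⟨c, hyc, hround⟩ := exists_eq_den_mul_of_mul_eq_mul (by omega) (by omega)
      (mul_round_eq_of_nint_le hx₀N.2 hyN.2 hx₀η hyη hNη)
    have hc : 0 < c := Nat.pos_of_ne_zero (by rintro rfl; omega)
    have hZN : (q.den : ℝ) ≤ N := by exact_mod_cast (Nat.le_of_dvd (by omega) ⟨c, hyc⟩).trans hyN.2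
    have hbound : c * δ ≤ N * η := by
      calc c * δ ≤ q.den * |((q.den * c : ℕ) : ℝ) * ξ - c * q.num| :=
            h.mul_le_mul_abs_sub q.den_pos c q.num
        _ = q.den * nint (y * ξ) := by rw [nint, hround, hyc]; push_cast; rfl
        _ ≤ N * η := mul_le_mul hZN hyη (nint_nonneg _) (Nat.cast_nonneg _)
    refine Finset.mem_image.mpr ⟨c, Finset.mem_Icc.mpr ⟨hc, ?_⟩, hyc.symm⟩
    exact Nat.le_floor ((le_div_iff₀ hδ).mpr hbound)
  exact (Finset.card_le_card hsub).trans (Finset.card_image_le.trans (by simp))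

end BadlyApprox

theorem stmt0_general (ξ δ α β : ℝ) (hδ0 : 0 < δ)
    (hbad : ∀ p : ℕ, 0 < p → δ ≤ (p : ℝ) * nint ((p : ℝ) * ξ))
    (hα : α = 1 - β)
    (p : ℕ) (hp : 0 < p) :
    (((Finset.Ioc p (2 * p)).filter
        (fun x : ℕ => nint ((x : ℝ) * ξ) ≤ δ / (((p : ℝ) * Real.log (p + 1)) ^ β))).card : ℝ)
      ≤ (24 * δ + 2) * (p : ℝ) ^ α / (Real.log (p + 1)) ^ β := by
  have hpR : (0 : ℝ) < p := by exact_mod_cast hp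
  have hL : 0 < Real.log (p + 1) := Real.log_pos (by linarith)
  rw [hα, mul_div_assoc, rpow_one_sub_div_rpow hpR hL.le]
  set E := ((p : ℝ) * Real.log (p + 1)) ^ β
  have hE : 0 < E := Real.rpow_pos_of_pos (mul_pos hpR hL) β
  set S := (Finset.Ioc p (2 * p)).filter (fun x : ℕ => nint ((x : ℝ) * ξ) ≤ δ / E)
  have hS : ∀ x ∈ S, p < x ∧ x ≤ 2 * p ∧ nint (x * ξ) ≤ δ / E := fun x hx => by
    simpa only [S, Finset.mem_filter, Finset.mem_Ioc, and_assoc] using hx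
  have hη : 2 * p * (δ / E) / δ = 2 * (p / E) := by field_simp
  have hpE : 0 < p / E := div_pos hpR hE
  rcases lt_or_ge (4 * δ * (p / E)) 1 with hsmall | hlarge
  · have hcard := BadlyApprox.card_le_floor_of_subset_Icc hbad hδ0 (N := 2 * p) (η := δ / E)
      (by push_cast; linarith [show 2 * (2 * (p : ℝ)) * (δ / E) = 4 * δ * (p / E) by ring])
      (S := S) fun x hx => ⟨Finset.mem_Icc.mpr ⟨by linarith [(hS x hx).1], (hS x hx).2.1⟩, (hS x hx).2.2⟩
    calc (S.card : ℝ) ≤ 2 * p * (δ / E) / δ := by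
          exact_mod_cast (Nat.cast_le.mpr hcard).trans (Nat.floor_le (by positivity))
      _ ≤ (24 * δ + 2) * (p / E) := by nlinarith
  · have hcard := BadlyApprox.card_le_of_subset_Ioc hbad hδ0 (η := δ / E) (by positivity)
      (m := p) hp (S := S) fun x hx =>
        ⟨Finset.mem_Ioc.mpr ⟨(hS x hx).1, by linarith [(hS x hx).2.1]⟩, (hS x hx).2.2⟩
    calc (S.card : ℝ) ≤ 2 * p * (δ / E) / δ + 1 := hcard
      _ ≤ (24 * δ + 2) * (p / E) := by nlinarith

theorem stmt0 (ξ δ α β : ℝ) (hδ0 : 0 < δ) (hδ1 : δ < 1/2)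
    (hbad : ∀ p : ℕ, 0 < p → δ ≤ (p : ℝ) * nint ((p : ℝ) * ξ))
    (hβ0 : 0 ≤ β) (hβ1 : β ≤ 1) (hα : α = 1 - β)
    (p : ℕ) (hp : 0 < p) :
    (((Finset.Ioc p (2 * p)).filter
        (fun x : ℕ => nint ((x : ℝ) * ξ) ≤ δ / (((p : ℝ) * Real.log (p + 1)) ^ β))).card : ℝ)
      ≤ (24 * δ + 2) * (p : ℝ) ^ α / (Real.log (p + 1)) ^ β :=
  stmt0_general ξ δ α β hδ0 hbad hα p hp
end

section
/- Let ξ be δ-badly approximable with 0 < δ < 1/24, let β ∈ [0,1], α = 1 − β, p ≥ 2 an integer, and q = ⌊(p²/δ)·log(p²/δ)⌋ + 1. Then the sum over all integers x with p < x ≤ q and ‖xξ‖ ≤ δ/(x·log(x+1))^β of the quantity 1/(x·log(x+1))^α is at most 2⁶·(1 + log(1/δ)). -/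
open Real

/-!
Write `w(x) = x log (x + 1)` and `K = K_ξ^{(β)}(p, q)`. For `x ∈ K`, bad approximability gives
`δ ≤ x ‖xξ‖`, so `w(x)^β ≤ x`; for `x < y` in `K` it gives
`δ ≤ (y - x) ‖(y - x)ξ‖ ≤ 2 (y - x) δ / w(x)^β`, so `w(x)^β ≤ 2 (y - x)`. Hence the blocks
`[x, x + ⌈w(x)^β / 2⌉)`, `x ∈ K`, are pairwise disjoint and lie in `(p, 2q)`. As `w` changes by
at most a factor `4` on a block, `1 / w(x)^(1-β) = w(x)^β / w(x)` is at most `8` times the sum of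
`1 / w` over the block of `x`. Summing, the sum over `K` is at most
`8 ∑_{p < y < 2q} 1 / w(y) ≤ 16 (log log 2q - log log (p + 1))`, and the choice of `q` makes
`log 2q ≤ (6 + 5 log (1/δ)) log (p + 1)`.
-/

open Finset

lemma nint_sub_le_s4 (a b : ℝ) : nint (a - b) ≤ nint a + nint b := by
  calc nint (a - b) ≤ |(a - b) - ((round a - round b : ℤ) : ℝ)| := round_le _ _
    _ = |(a - round a) - (b - round b)| := by push_cast; ring_nf
    _ ≤ nint a + nint b := abs_sub _ _

def BadlyApproximable (δ ξ : ℝ) : Prop := ∀ p : ℕ, 0 < p → δ ≤ (p : ℝ) * nint ((p : ℝ) * ξ)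

lemma BadlyApproximable.le_two_mul_sub_mul {δ ξ ε : ℝ} (h : BadlyApproximable δ ξ) {m n : ℕ}
    (hmn : m < n) (hm : nint (m * ξ) ≤ ε) (hn : nint (n * ξ) ≤ ε) :
    δ ≤ 2 * ((n : ℝ) - m) * ε := by
  have hcast : ((n - m : ℕ) : ℝ) = n - m := Nat.cast_sub hmn.le
  have hsub : nint (((n : ℝ) - m) * ξ) ≤ 2 * ε := by
    rw [sub_mul]
    linarith [nint_sub_le_s4 (n * ξ) (m * ξ)]
  calc δ ≤ ((n - m : ℕ) : ℝ) * nint (((n - m : ℕ) : ℝ) * ξ) := h _ (Nat.sub_pos_of_lt hmn)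
    _ = ((n : ℝ) - m) * nint (((n : ℝ) - m) * ξ) := by rw [hcast]
    _ ≤ ((n : ℝ) - m) * (2 * ε) :=
      mul_le_mul_of_nonneg_left hsub (sub_nonneg.2 (by exact_mod_cast hmn.le))
    _ = 2 * ((n : ℝ) - m) * ε := by ring

noncomputable def weight (x : ℝ) : ℝ := x * log (x + 1)

lemma weight_pos {x : ℝ} (hx : 0 < x) : 0 < weight x :=
  mul_pos hx (log_pos (by linarith))

lemma weight_nonneg {x : ℝ} (hx : 0 ≤ x) : 0 ≤ weight x :=
  mul_nonneg hx (log_nonneg (by linarith))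

lemma weight_le_weight {x y : ℝ} (hx : 0 ≤ x) (hxy : x ≤ y) : weight x ≤ weight y :=
  mul_le_mul hxy (log_le_log (by linarith) (by linarith)) (log_nonneg (by linarith))
    (hx.trans hxy)

lemma weight_le_four_mul {x y : ℝ} (hy : 0 ≤ y) (hyx : y ≤ 2 * x) : weight y ≤ 4 * weight x := by
  have hlog : log (y + 1) ≤ 2 * log (x + 1) :=
    calc log (y + 1) ≤ log ((x + 1) ^ 2) := log_le_log (by linarith) (by nlinarith)
      _ = 2 * log (x + 1) := by rw [log_pow]; norm_num
  have := log_nonneg (show 1 ≤ y + 1 by linarith)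
  unfold weight
  nlinarith

lemma div_le_log_sub_log {a b : ℝ} (ha : 0 < a) (hab : a ≤ b) :
    (b - a) / b ≤ log b - log a := by
  have hb := ha.trans_le hab
  have := one_sub_inv_le_log_of_pos (div_pos hb ha)
  rw [log_div hb.ne' ha.ne', inv_div] at this
  calc (b - a) / b = 1 - a / b := by field_simp
    _ ≤ _ := this

lemma inv_weight_le_two_mul_sub_log_log {y : ℝ} (hy : 1 < y) :
    1 / weight y ≤ 2 * (log (log (y + 1)) - log (log y)) := by
  have hlogy : 0 < log y := log_pos hy
  have hlog : log y ≤ log (y + 1) := log_le_log (by linarith) (by linarith)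
  have hlog_pos : 0 < log (y + 1) := hlogy.trans_le hlog
  calc 1 / weight y ≤ 2 * ((1 / (y + 1)) / log (y + 1)) := by
        unfold weight
        rw [div_div, mul_one_div, div_le_div_iff₀ (by positivity) (by positivity)]
        nlinarith
    _ ≤ 2 * ((log (y + 1) - log y) / log (y + 1)) := by
        have := div_le_log_sub_log (by linarith : 0 < y) (by linarith : y ≤ y + 1)
        rw [add_sub_cancel_left] at this
        gcongr
    _ ≤ 2 * (log (log (y + 1)) - log (log y)) := by
        gcongr
        exact div_le_log_sub_log hlogy hlog

lemma sum_inv_weight_le_two_mul_sub_log_log {a b : ℕ} (ha : 2 ≤ a) (hab : a ≤ b) :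
    ∑ y ∈ Ico a b, 1 / weight y ≤ 2 * (log (log b) - log (log a)) := by
  calc ∑ y ∈ Ico a b, 1 / weight y
      ≤ ∑ y ∈ Ico a b, 2 * (log (log ((y + 1 : ℕ) : ℝ)) - log (log (y : ℝ))) := by
        refine sum_le_sum fun y hy => ?_
        have : (1 : ℝ) < y := by exact_mod_cast (by simp at hy; omega : 1 < y)
        simpa using inv_weight_le_two_mul_sub_log_log this
    _ = 2 * (log (log b) - log (log a)) := by
        rw [← mul_sum, sum_Ico_sub (fun n : ℕ => log (log (n : ℝ))) hab]

/-- The set `K_ξ^{(β)}(p, q)`. -/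
noncomputable def approxSet (ξ δ β : ℝ) (p q : ℕ) : Finset ℕ :=
  (Ioc p q).filter fun x => nint (x * ξ) ≤ δ / weight x ^ β

noncomputable def blockLen (β : ℝ) (x : ℕ) : ℕ := ⌈weight x ^ β / 2⌉₊

lemma blockLen_le {β : ℝ} {x : ℕ} (hx : weight x ^ β ≤ x) : blockLen β x ≤ x :=
  Nat.ceil_le.2 (by linarith [Nat.cast_nonneg (α := ℝ) x])

section approxSet

variable {ξ δ β : ℝ} {p q : ℕ}

lemma weight_rpow_le_of_mem_approxSet (hbad : BadlyApproximable δ ξ) (hδ : 0 < δ) {x : ℕ}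
    (hx : x ∈ approxSet ξ δ β p q) : weight x ^ β ≤ x := by
  simp only [approxSet, mem_filter, mem_Ioc] at hx
  have hw : 0 < weight x ^ β :=
    rpow_pos_of_pos (weight_pos (by exact_mod_cast (by omega : 0 < x))) β
  have := (hbad x (by omega)).trans (mul_le_mul_of_nonneg_left hx.2 (Nat.cast_nonneg x))
  rw [mul_div_assoc', le_div_iff₀ hw] at this
  nlinarith

lemma weight_rpow_le_two_mul_sub_of_mem_approxSet (hbad : BadlyApproximable δ ξ) (hδ : 0 < δ)
    (hβ : 0 ≤ β) {x y : ℕ} (hx : x ∈ approxSet ξ δ β p q) (hy : y ∈ approxSet ξ δ β p q)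
    (hxy : x < y) : weight x ^ β ≤ 2 * ((y : ℝ) - x) := by
  simp only [approxSet, mem_filter, mem_Ioc] at hx hy
  have hwx : 0 < weight x := weight_pos (by exact_mod_cast (by omega : 0 < x))
  have hw : 0 < weight x ^ β := rpow_pos_of_pos hwx β
  have hy' : nint (y * ξ) ≤ δ / weight x ^ β :=
    hy.2.trans (div_le_div_of_nonneg_left hδ.le hw
      (rpow_le_rpow hwx.le (weight_le_weight (by positivity) (by exact_mod_cast hxy.le)) hβ))
  have := hbad.le_two_mul_sub_mul hxy hx.2 hy'
  rw [mul_div_assoc', le_div_iff₀ hw] at this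
  nlinarith

lemma add_blockLen_le_of_mem_approxSet (hbad : BadlyApproximable δ ξ) (hδ : 0 < δ)
    (hβ : 0 ≤ β) {x y : ℕ} (hx : x ∈ approxSet ξ δ β p q) (hy : y ∈ approxSet ξ δ β p q)
    (hxy : x < y) : x + blockLen β x ≤ y := by
  have := weight_rpow_le_two_mul_sub_of_mem_approxSet hbad hδ hβ hx hy hxy
  have : blockLen β x ≤ y - x := Nat.ceil_le.2 (by rw [Nat.cast_sub hxy.le]; linarith)
  omega

end approxSet

lemma card_div_le_sum_inv_weight {x m : ℕ} (hm : m ≤ x) :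
    (m : ℝ) / (4 * weight x) ≤ ∑ y ∈ Ico x (x + m), 1 / weight y := by
  have hbound : ∀ y ∈ Ico x (x + m), 1 / (4 * weight x) ≤ 1 / weight y := by
    intro y hy
    rw [mem_Ico] at hy
    exact one_div_le_one_div_of_le (weight_pos (by exact_mod_cast (by omega : 0 < y)))
      (weight_le_four_mul (Nat.cast_nonneg y) (by exact_mod_cast (by omega : y ≤ 2 * x)))
  have := card_nsmul_le_sum _ _ _ hbound
  rwa [Nat.card_Ico, add_tsub_cancel_left, nsmul_eq_mul, mul_one_div] at this

lemma one_div_weight_rpow_le {β : ℝ} {x : ℕ} (hx : 0 < x) (hxβ : weight x ^ β ≤ x) :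
    1 / weight x ^ (1 - β) ≤ 8 * ∑ y ∈ Ico x (x + blockLen β x), 1 / weight y := by
  have hw : 0 < weight x := weight_pos (by exact_mod_cast hx)
  have hM : weight x ^ β / 2 ≤ blockLen β x := Nat.le_ceil _
  calc 1 / weight x ^ (1 - β) = weight x ^ β / weight x := by
        rw [rpow_sub hw, rpow_one, one_div_div]
    _ ≤ 2 * blockLen β x / weight x := by
        gcongr
        linarith
    _ = 8 * (blockLen β x / (4 * weight x)) := by field_simp; ring
    _ ≤ 8 * ∑ y ∈ Ico x (x + blockLen β x), 1 / weight y := by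
        gcongr
        exact card_div_le_sum_inv_weight (blockLen_le hxβ)

lemma sum_approxSet_le_sum_Ico {ξ δ β : ℝ} {p q : ℕ} (hbad : BadlyApproximable δ ξ)
    (hδ : 0 < δ) (hβ : 0 ≤ β) :
    ∑ x ∈ approxSet ξ δ β p q, 1 / weight x ^ (1 - β) ≤
      8 * ∑ y ∈ Ico (p + 1) (2 * q), 1 / weight y := by
  set K := approxSet ξ δ β p q
  have hmem : ∀ x ∈ K, p < x ∧ x ≤ q := fun x hx => by
    simpa only [K, approxSet, mem_filter, mem_Ioc] using (mem_filter.1 hx).1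
  have hdisj : (K : Set ℕ).PairwiseDisjoint fun x => Ico x (x + blockLen β x) := by
    intro x hx y hy hxy
    rcases hxy.lt_or_gt with h | h
    · exact disjoint_of_subset_left (Ico_subset_Ico_right
        (add_blockLen_le_of_mem_approxSet hbad hδ hβ hx hy h)) (Ico_disjoint_Ico_consecutive _ _ _)
    · exact disjoint_of_subset_right (Ico_subset_Ico_right
        (add_blockLen_le_of_mem_approxSet hbad hδ hβ hy hx h))
        (Ico_disjoint_Ico_consecutive _ _ _).symm
  have hsub : K.biUnion (fun x => Ico x (x + blockLen β x)) ⊆ Ico (p + 1) (2 * q) := by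
    intro y hy
    obtain ⟨x, hx, hyx⟩ := mem_biUnion.1 hy
    have := blockLen_le (weight_rpow_le_of_mem_approxSet hbad hδ hx)
    have := hmem x hx
    rw [mem_Ico] at hyx ⊢
    omega
  calc ∑ x ∈ K, 1 / weight x ^ (1 - β)
      ≤ ∑ x ∈ K, 8 * ∑ y ∈ Ico x (x + blockLen β x), 1 / weight y :=
        sum_le_sum fun x hx => one_div_weight_rpow_le (by linarith [hmem x hx])
          (weight_rpow_le_of_mem_approxSet hbad hδ hx)
    _ = 8 * ∑ y ∈ K.biUnion (fun x => Ico x (x + blockLen β x)), 1 / weight y := by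
        rw [← mul_sum, sum_biUnion hdisj]
    _ ≤ 8 * ∑ y ∈ Ico (p + 1) (2 * q), 1 / weight y := by
        gcongr
        intro y _ _
        exact one_div_nonneg.2 (weight_nonneg (Nat.cast_nonneg y))

lemma lt_floor_mul_log_add_one {R : ℝ} {p : ℕ} (hR : p + 1 ≤ R) : p < ⌊R * log R⌋₊ + 1 := by
  have hR0 : 0 < R := by linarith [Nat.cast_nonneg (α := ℝ) p]
  have := one_sub_inv_le_log_of_pos hR0
  have : (p : ℝ) ≤ R * log R := by
    calc (p : ℝ) ≤ R * (1 - R⁻¹) := by rw [mul_sub, mul_inv_cancel₀ hR0.ne']; linarith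
      _ ≤ R * log R := by gcongr
  exact Nat.lt_succ_of_le (Nat.le_floor this)

lemma log_two_mul_floor_mul_log_add_one_le {R : ℝ} (hR : 2 ≤ R) :
    log (2 * ((⌊R * log R⌋₊ + 1 : ℕ) : ℝ)) ≤ 3 * log R := by
  have hlog := log_le_sub_one_of_pos (by linarith : 0 < R)
  have hfloor : (⌊R * log R⌋₊ : ℝ) ≤ R * log R :=
    Nat.floor_le (mul_nonneg (by linarith) (log_nonneg (by linarith)))
  have hcube : 2 * ((⌊R * log R⌋₊ + 1 : ℕ) : ℝ) ≤ R ^ 3 := by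
    have : R * log R ≤ R * (R - 1) := by gcongr
    push_cast
    nlinarith [mul_nonneg (sq_nonneg R) (sub_nonneg.2 hR)]
  calc log (2 * ((⌊R * log R⌋₊ + 1 : ℕ) : ℝ)) ≤ log (R ^ 3) := log_le_log (by positivity) hcube
    _ = 3 * log R := by rw [log_pow]; norm_num

lemma log_log_sub_log_log_le {δ : ℝ} {p q : ℕ} (hδ0 : 0 < δ) (hδ1 : δ < 1/24) (hp : 2 ≤ p)
    (hq : q = ⌊((p : ℝ)^2 / δ) * log ((p : ℝ)^2 / δ)⌋₊ + 1) :
    log (log (2 * q)) - log (log (p + 1)) ≤ 5 + log (1 / δ) := by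
  set L := log (1 / δ)
  have hp2 : (2 : ℝ) ≤ p := by exact_mod_cast hp
  have hR : 24 * (p : ℝ) ^ 2 ≤ (p : ℝ) ^ 2 / δ := by rw [le_div_iff₀ hδ0]; nlinarith
  have hlogR : log ((p : ℝ) ^ 2 / δ) = 2 * log p + L := by
    rw [log_div (by positivity) hδ0.ne', log_pow]
    simp only [L, one_div, log_inv]
    push_cast
    ring
  have hL : 0 ≤ L := log_nonneg (by rw [le_div_iff₀ hδ0]; linarith)
  have hℓ : 2 / 3 ≤ log (p + 1) := by
    have := one_sub_inv_le_log_of_pos (by linarith : (0 : ℝ) < p + 1)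
    have : ((p : ℝ) + 1)⁻¹ ≤ 1 / 3 := by rw [inv_le_comm₀ (by linarith) (by norm_num)]; linarith
    linarith
  have hlogp : log p ≤ log (p + 1) := log_le_log (by linarith) (by linarith)
  have h2q : log (2 * q) ≤ (6 + 5 * L) * log (p + 1) := by
    have := log_two_mul_floor_mul_log_add_one_le (R := (p : ℝ) ^ 2 / δ) (by nlinarith)
    rw [← hq, hlogR] at this
    nlinarith
  have hq1 : (1 : ℝ) ≤ q := by exact_mod_cast (by omega : 1 ≤ q)
  calc log (log (2 * q)) - log (log (p + 1))
        ≤ log ((6 + 5 * L) * log (p + 1)) - log (log (p + 1)) := by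
        gcongr
        exact log_pos (by linarith)
    _ = log (6 + 5 * L) := by
        rw [log_mul (by positivity) (by positivity)]; ring
    _ ≤ log (6 * (1 + L)) := log_le_log (by positivity) (by linarith)
    _ = log 6 + log (1 + L) := log_mul (by norm_num) (by positivity)
    _ ≤ 5 + L := by
        linarith [log_le_sub_one_of_pos (by norm_num : (0 : ℝ) < 6),
          log_le_sub_one_of_pos (by positivity : 0 < 1 + L)]

theorem stmt4_general (ξ δ α β : ℝ) (hδ0 : 0 < δ) (hδ1 : δ < 1/24)
    (hbad : ∀ p : ℕ, 0 < p → δ ≤ (p : ℝ) * nint ((p : ℝ) * ξ))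
    (hβ0 : 0 ≤ β) (hα : α = 1 - β)
    (p q : ℕ) (hp : 2 ≤ p)
    (hq : q = ⌊((p : ℝ)^2 / δ) * Real.log ((p : ℝ)^2 / δ)⌋₊ + 1) :
    ∑ x ∈ (Finset.Ioc p q).filter
        (fun x : ℕ => nint ((x : ℝ) * ξ) ≤ δ / (((x : ℝ) * Real.log (x + 1)) ^ β)),
      1 / (((x : ℝ) * Real.log (x + 1)) ^ α) ≤ 2 ^ 6 * (1 + Real.log (1 / δ)) := by
  subst hα
  have hp2 : (2 : ℝ) ≤ p := by exact_mod_cast hp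
  have hpq : p < q := hq ▸ lt_floor_mul_log_add_one (by rw [le_div_iff₀ hδ0]; nlinarith)
  have hL : 1 / 3 ≤ log (1 / δ) := by
    have := one_sub_inv_le_log_of_pos (one_div_pos.2 hδ0)
    rw [inv_div, div_one] at this
    linarith
  have hK := sum_approxSet_le_sum_Ico (p := p) (q := q) hbad hδ0 hβ0
  have hsum := sum_inv_weight_le_two_mul_sub_log_log (a := p + 1) (b := 2 * q) (by omega)
    (by omega)
  have hlog := log_log_sub_log_log_le hδ0 hδ1 hp hq
  push_cast at hsum
  change ∑ x ∈ approxSet ξ δ β p q, 1 / weight x ^ (1 - β) ≤ _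
  linarith

theorem stmt4 (ξ δ α β : ℝ) (hδ0 : 0 < δ) (hδ1 : δ < 1/24)
    (hbad : ∀ p : ℕ, 0 < p → δ ≤ (p : ℝ) * nint ((p : ℝ) * ξ))
    (hβ0 : 0 ≤ β) (hβ1 : β ≤ 1) (hα : α = 1 - β)
    (p q : ℕ) (hp : 2 ≤ p)
    (hq : q = ⌊((p : ℝ)^2 / δ) * Real.log ((p : ℝ)^2 / δ)⌋₊ + 1) :
    ∑ x ∈ (Finset.Ioc p q).filter
        (fun x : ℕ => nint ((x : ℝ) * ξ) ≤ δ / (((x : ℝ) * Real.log (x + 1)) ^ β)),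
      1 / (((x : ℝ) * Real.log (x + 1)) ^ α) ≤ 2 ^ 6 * (1 + Real.log (1 / δ)) :=
  stmt4_general ξ δ α β hδ0 hδ1 hbad hβ0 hα p q hp hq
end

section
/- Let 0 < δ < 1/2, α ∈ [0,1], and let q, x be positive integers with x ≥ (q²/δ)·log(q²/δ) and q ≥ 2. Then 2^{l(q,α)} / 2^{l(x,α)} ≤ 2δ / (x·log(x+1))^α, where l(t,α) = ⌊ log( t^{1+α}(log(t+1))^α / (2δ) ) / log 2 ⌋. -/
/-!
Writing `f t = t^(1+α) (log (t+1))^α / (2δ)`, the integer `l(t,α)` is `⌊log₂ f t⌋`, so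
`2^l(q,α) ≤ f q` and `2^l(x,α) > f x / 2`; the quotient is therefore at most `2 f q / f x`.
Since `α ≤ 1` and `log (q+1) ≥ 1`, we have `q^(1+α) (log (q+1))^α ≤ q² log (q²/δ) ≤ δ x`, and
`2 δ x / (x^(1+α) (log (x+1))^α) = 2δ / (x log (x+1))^α`.
-/

open Real

theorem zpow_floor_log_div_log_div_le {b : ℕ} (hb : 1 < b) {A B : ℝ} (hA : 0 < A) (hB : 0 < B) :
    (b : ℝ) ^ ⌊log A / log b⌋ / (b : ℝ) ^ ⌊log B / log b⌋ ≤ b * A / B := by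
  rw [log_div_log, log_div_log, floor_logb_natCast hA.le, floor_logb_natCast hB.le]
  have hA' : (b : ℝ) ^ Int.log b A ≤ A := Int.zpow_log_le_self hb hA
  have hB' : B < b * (b : ℝ) ^ Int.log b B := by
    have := Int.lt_zpow_succ_log_self hb B
    rwa [zpow_add_one₀ (by positivity), mul_comm] at this
  rw [div_le_div_iff₀ (by positivity) hB]
  calc (b : ℝ) ^ Int.log b A * B ≤ A * (b * (b : ℝ) ^ Int.log b B) := by gcongr
    _ = b * A * (b : ℝ) ^ Int.log b B := by ring

theorem one_le_log_add_one {t : ℝ} (ht : 2 ≤ t) : 1 ≤ log (t + 1) := by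
  rw [le_log_iff_exp_le (by linarith)]
  linarith [exp_one_lt_d9]

theorem rpow_one_add_mul_log_rpow_le {t α : ℝ} (ht : 2 ≤ t) (hα : α ≤ 1) :
    t ^ (1 + α) * log (t + 1) ^ α ≤ t ^ 2 * log (t + 1) := by
  have hlog := one_le_log_add_one ht
  have ht2 : t ^ (1 + α) ≤ t ^ 2 := by
    rw [← rpow_natCast]
    exact rpow_le_rpow_of_exponent_le (by linarith) (by push_cast; linarith)
  have hlog_rpow : log (t + 1) ^ α ≤ log (t + 1) := by
    simpa using rpow_le_rpow_of_exponent_le hlog hα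
  gcongr

theorem log_add_one_le_log_sq_div {t δ : ℝ} (ht : 2 ≤ t) (hδ0 : 0 < δ) (hδ1 : δ ≤ 1) :
    log (t + 1) ≤ log (t ^ 2 / δ) := by
  apply log_le_log (by linarith)
  rw [le_div_iff₀ hδ0]
  nlinarith

theorem stmt12_general (α δ : ℝ) (hα1 : α ≤ 1) (hδ0 : 0 < δ) (hδ1 : δ < 1/2)
    (q x : ℕ) (hq : 2 ≤ q) (hx : 0 < x)
    (hxq : ((q : ℝ) ^ 2 / δ) * Real.log ((q : ℝ) ^ 2 / δ) ≤ (x : ℝ))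
    (lq lx : ℤ)
    (hlq : lq = ⌊Real.log ((q : ℝ) ^ (1 + α) * (Real.log ((q : ℝ) + 1)) ^ α / (2 * δ))
                  / Real.log 2⌋)
    (hlx : lx = ⌊Real.log ((x : ℝ) ^ (1 + α) * (Real.log ((x : ℝ) + 1)) ^ α / (2 * δ))
                  / Real.log 2⌋) :
    (2 : ℝ) ^ lq / (2 : ℝ) ^ lx ≤ 2 * δ / (((x : ℝ) * Real.log ((x : ℝ) + 1)) ^ α) := by
  have hq' : (2 : ℝ) ≤ q := by exact_mod_cast hq
  have hx' : (0 : ℝ) < x := by exact_mod_cast hx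
  have hlogx : 0 < log ((x : ℝ) + 1) := log_pos (by linarith)
  have hlogq : 0 < log ((q : ℝ) + 1) := log_pos (by linarith)
  have hnum : (q : ℝ) ^ (1 + α) * log ((q : ℝ) + 1) ^ α ≤ δ * x :=
    calc (q : ℝ) ^ (1 + α) * log ((q : ℝ) + 1) ^ α ≤ (q : ℝ) ^ 2 * log ((q : ℝ) + 1) :=
          rpow_one_add_mul_log_rpow_le hq' hα1
      _ ≤ (q : ℝ) ^ 2 * log ((q : ℝ) ^ 2 / δ) := by
          gcongr ?_ * ?_; exact log_add_one_le_log_sq_div hq' hδ0 (by linarith)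
      _ = δ * ((q : ℝ) ^ 2 / δ * log ((q : ℝ) ^ 2 / δ)) := by field_simp
      _ ≤ δ * x := by gcongr
  subst hlq hlx
  calc (2 : ℝ) ^ ⌊log ((q : ℝ) ^ (1 + α) * log ((q : ℝ) + 1) ^ α / (2 * δ)) / log 2⌋
        / (2 : ℝ) ^ ⌊log ((x : ℝ) ^ (1 + α) * log ((x : ℝ) + 1) ^ α / (2 * δ)) / log 2⌋
      ≤ 2 * ((q : ℝ) ^ (1 + α) * log ((q : ℝ) + 1) ^ α / (2 * δ))
          / ((x : ℝ) ^ (1 + α) * log ((x : ℝ) + 1) ^ α / (2 * δ)) := by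
        simpa using zpow_floor_log_div_log_div_le (b := 2) one_lt_two (by positivity)
          (by positivity)
    _ = 2 * ((q : ℝ) ^ (1 + α) * log ((q : ℝ) + 1) ^ α)
          / (x * ((x : ℝ) * log ((x : ℝ) + 1)) ^ α) := by
        rw [mul_rpow hx'.le hlogx.le, rpow_add hx', rpow_one]
        field_simp
    _ ≤ 2 * (δ * x) / (x * ((x : ℝ) * log ((x : ℝ) + 1)) ^ α) := by gcongr
    _ = 2 * δ / (((x : ℝ) * log ((x : ℝ) + 1)) ^ α) := by
        field_simp

theorem stmt12 (α δ : ℝ) (hα0 : 0 ≤ α) (hα1 : α ≤ 1) (hδ0 : 0 < δ) (hδ1 : δ < 1/2)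
    (q x : ℕ) (hq : 2 ≤ q) (hx : 0 < x)
    (hxq : ((q : ℝ) ^ 2 / δ) * Real.log ((q : ℝ) ^ 2 / δ) ≤ (x : ℝ))
    (lq lx : ℤ)
    (hlq : lq = ⌊Real.log ((q : ℝ) ^ (1 + α) * (Real.log ((q : ℝ) + 1)) ^ α / (2 * δ))
                  / Real.log 2⌋)
    (hlx : lx = ⌊Real.log ((x : ℝ) ^ (1 + α) * (Real.log ((x : ℝ) + 1)) ^ α / (2 * δ))
                  / Real.log 2⌋) :
    (2 : ℝ) ^ lq / (2 : ℝ) ^ lx ≤ 2 * δ / (((x : ℝ) * Real.log ((x : ℝ) + 1)) ^ α) :=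
  stmt12_general α δ hα1 hδ0 hδ1 q x hq hx hxq lq lx hlq hlx
end
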